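/- Second performance difference lemma across transition kernels: for any two transition kernels p and p' and any policy π, V_{π,p}(ρ) − V_{π,p'}(ρ) = (1/(1−γ)) Σ_{s∈S} d_ρ^{π,p}(s) Σ_{a∈A} π(a|s) Σ_{s'∈S} (p(s'|s,a) − p'(s'|s,a))·(c(s,a,s') + γ·V_{π,p'}(s')). -/

import Mathlib

/-!
With `M = M_{π,p}` and the resolvent `R = ∑ γ^l M^l = (1 - γ M)⁻¹`, the definitions say
`V_{π,p} = R c_{π,p}` and `d_ρ^{π,p} = (1 - γ) ρᵀ R`. By the Bellman equation
`V' = c_{π,p'} + γ M_{π,p'} V'` for `V' = V_{π,p'}`, the inner double sum on the right is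
`g = c_{π,p} + γ M V' - V' = c_{π,p} - (1 - γ M) V'`, so the right side is
`ρᵀ R g = ρᵀ (V_{π,p} - R (1 - γ M) V') = ρᵀ (V_{π,p} - V')`.
-/

open Finset

variable {S A : Type*}

/-- Expected one-step cost `c_{π,p}(s) = Σ_a π(a|s) Σ_{s'} p(s'|s,a) c(s,a,s')`. -/
noncomputable def cPi [Fintype S] [Fintype A] (π : S → A → ℝ) (p : S → A → S → ℝ)
    (c : S → A → S → ℝ) (s : S) : ℝ :=
  ∑ a, π s a * ∑ s', p s a s' * c s a s'

/-- Induced state-transition matrix `M_{π,p}(s,s') = Σ_a π(a|s) p(s'|s,a)`. -/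
noncomputable def matPi [Fintype A] (π : S → A → ℝ) (p : S → A → S → ℝ) :
    Matrix S S ℝ :=
  Matrix.of fun s s' => ∑ a, π s a * p s a s'

/-- Discounted value function `V_{π,p}(s) = Σ_{l} γ^l ((M_{π,p})^l c_{π,p})(s)`. -/
noncomputable def Vf [Fintype S] [Fintype A] [DecidableEq S] (γ : ℝ) (π : S → A → ℝ)
    (p : S → A → S → ℝ) (c : S → A → S → ℝ) (s : S) : ℝ :=
  ∑' l : ℕ, γ ^ l * ((matPi π p ^ l).mulVec (cPi π p c)) s

/-- Value from an initial distribution, `V_{π,p}(ρ) = Σ_s ρ(s) V_{π,p}(s)`. -/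
noncomputable def Vrho [Fintype S] [Fintype A] [DecidableEq S] (γ : ℝ) (ρ : S → ℝ)
    (π : S → A → ℝ) (p : S → A → S → ℝ) (c : S → A → S → ℝ) : ℝ :=
  ∑ s, ρ s * Vf γ π p c s

/-- Discounted state visitation distribution
`d_ρ^{π,p}(s) = (1-γ) Σ_l γ^l Σ_{s₀} ρ(s₀) ((M_{π,p})^l)(s₀,s)`. -/
noncomputable def dvisit [Fintype S] [Fintype A] [DecidableEq S] (γ : ℝ) (ρ : S → ℝ)
    (π : S → A → ℝ) (p : S → A → S → ℝ) (s : S) : ℝ :=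
  (1 - γ) * ∑' l : ℕ, γ ^ l * ∑ s₀, ρ s₀ * (matPi π p ^ l) s₀ s

open Matrix

section DiscountedResolvent

variable {n : Type*} [Fintype n] [DecidableEq n] {M : Matrix n n ℝ} {γ : ℝ}

noncomputable def Matrix.discountedResolvent (γ : ℝ) (M : Matrix n n ℝ) : Matrix n n ℝ :=
  ∑' l : ℕ, γ ^ l • M ^ l

lemma summable_pow_smul_pow_of_mem_rowStochastic (hM : M ∈ rowStochastic ℝ n)
    (hγ0 : 0 ≤ γ) (hγ1 : γ < 1) : Summable fun l : ℕ => γ ^ l • M ^ l := by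
  refine Pi.summable.2 fun i => Pi.summable.2 fun j => ?_
  have hMl (l : ℕ) : M ^ l ∈ rowStochastic ℝ n := pow_mem hM l
  refine (summable_geometric_of_lt_one hγ0 hγ1).of_nonneg_of_le (fun l => ?_) (fun l => ?_)
  · exact mul_nonneg (pow_nonneg hγ0 l) (nonneg_of_mem_rowStochastic (hMl l))
  · exact mul_le_of_le_one_right (pow_nonneg hγ0 l) (le_one_of_mem_rowStochastic (hMl l))

lemma hasSum_discountedResolvent (hM : M ∈ rowStochastic ℝ n) (hγ0 : 0 ≤ γ) (hγ1 : γ < 1) :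
    HasSum (fun l : ℕ => γ ^ l • M ^ l) (discountedResolvent γ M) :=
  (summable_pow_smul_pow_of_mem_rowStochastic hM hγ0 hγ1).hasSum

lemma hasSum_pow_succ_smul_pow_succ (hM : M ∈ rowStochastic ℝ n) (hγ0 : 0 ≤ γ) (hγ1 : γ < 1) :
    HasSum (fun l : ℕ => γ ^ (l + 1) • M ^ (l + 1)) (discountedResolvent γ M - 1) := by
  simpa using (hasSum_nat_add_iff' 1).2 (hasSum_discountedResolvent hM hγ0 hγ1)

lemma smul_mul_discountedResolvent (hM : M ∈ rowStochastic ℝ n) (hγ0 : 0 ≤ γ) (hγ1 : γ < 1) :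
    γ • (M * discountedResolvent γ M) = discountedResolvent γ M - 1 := by
  have h := ((hasSum_discountedResolvent hM hγ0 hγ1).mul_left M).const_smul γ
  have hterm (l : ℕ) : γ • (M * (γ ^ l • M ^ l)) = γ ^ (l + 1) • M ^ (l + 1) := by
    rw [mul_smul_comm, smul_smul, pow_succ', pow_succ']
  simp only [hterm] at h
  exact h.unique (hasSum_pow_succ_smul_pow_succ hM hγ0 hγ1)

lemma smul_discountedResolvent_mul (hM : M ∈ rowStochastic ℝ n) (hγ0 : 0 ≤ γ) (hγ1 : γ < 1) :
    γ • (discountedResolvent γ M * M) = discountedResolvent γ M - 1 := by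
  have h := ((hasSum_discountedResolvent hM hγ0 hγ1).mul_right M).const_smul γ
  have hterm (l : ℕ) : γ • (γ ^ l • M ^ l * M) = γ ^ (l + 1) • M ^ (l + 1) := by
    rw [smul_mul_assoc, smul_smul, pow_succ' γ, pow_succ M]
  simp only [hterm] at h
  exact h.unique (hasSum_pow_succ_smul_pow_succ hM hγ0 hγ1)

lemma discountedResolvent_mul_one_sub_smul (hM : M ∈ rowStochastic ℝ n) (hγ0 : 0 ≤ γ)
    (hγ1 : γ < 1) : discountedResolvent γ M * (1 - γ • M) = 1 := by
  rw [mul_sub, mul_one, mul_smul_comm, smul_discountedResolvent_mul hM hγ0 hγ1, sub_sub_cancel]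

end DiscountedResolvent

section HasSumMatrix

variable {ι m n R : Type*} [NonUnitalNonAssocSemiring R]
  [TopologicalSpace R] [IsTopologicalSemiring R] {f : ι → Matrix m n R} {A : Matrix m n R}

lemma HasSum.mulVec_apply [Fintype n] (h : HasSum f A) (v : n → R) (i : m) :
    HasSum (fun k => (f k *ᵥ v) i) ((A *ᵥ v) i) :=
  hasSum_sum fun j _ => (Pi.hasSum.1 (Pi.hasSum.1 h i) j).mul_right (v j)

lemma HasSum.vecMul_apply [Fintype m] (h : HasSum f A) (v : m → R) (j : n) :
    HasSum (fun k => (v ᵥ* f k) j) ((v ᵥ* A) j) :=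
  hasSum_sum fun i _ => (Pi.hasSum.1 (Pi.hasSum.1 h i) j).mul_left (v i)

end HasSumMatrix

section MDP

variable [Fintype S] [Fintype A] {γ : ℝ} {π : S → A → ℝ} {p : S → A → S → ℝ}

lemma matPi_mem_rowStochastic [DecidableEq S] (hπ0 : ∀ s a, 0 ≤ π s a)
    (hπ1 : ∀ s, ∑ a, π s a = 1) (hp0 : ∀ s a s', 0 ≤ p s a s') (hp1 : ∀ s a, ∑ s', p s a s' = 1) :
    matPi π p ∈ rowStochastic ℝ S := by
  refine mem_rowStochastic_iff_sum.2 ⟨fun s s' => ?_, fun s => ?_⟩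
  · exact sum_nonneg fun a _ => mul_nonneg (hπ0 s a) (hp0 s a s')
  · simp only [matPi, of_apply]
    rw [sum_comm]
    simp [← mul_sum, hp1, hπ1]

lemma sum_policy_mul_sum_kernel_mul_add (c : S → A → S → ℝ) (v : S → ℝ) (s : S) :
    ∑ a, π s a * ∑ s', p s a s' * (c s a s' + γ * v s') =
      cPi π p c s + γ * (matPi π p *ᵥ v) s := by
  simp only [cPi, matPi, mulVec, dotProduct, of_apply, mul_add, sum_add_distrib, mul_sum, sum_mul]
  rw [sum_comm (γ := S)]
  congr 1
  exact sum_congr rfl fun a _ => sum_congr rfl fun s' _ => by ring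

variable [DecidableEq S]

lemma Vf_eq_discountedResolvent_mulVec (hM : matPi π p ∈ rowStochastic ℝ S) (hγ0 : 0 ≤ γ)
    (hγ1 : γ < 1) (c : S → A → S → ℝ) :
    Vf γ π p c = discountedResolvent γ (matPi π p) *ᵥ cPi π p c := by
  funext s
  rw [← ((hasSum_discountedResolvent hM hγ0 hγ1).mulVec_apply (cPi π p c) s).tsum_eq]
  simp only [smul_mulVec, Pi.smul_apply, smul_eq_mul]
  rfl

lemma Vf_bellman (hM : matPi π p ∈ rowStochastic ℝ S) (hγ0 : 0 ≤ γ) (hγ1 : γ < 1)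
    (c : S → A → S → ℝ) :
    Vf γ π p c = cPi π p c + γ • (matPi π p *ᵥ Vf γ π p c) := by
  rw [Vf_eq_discountedResolvent_mulVec hM hγ0 hγ1, mulVec_mulVec, ← smul_mulVec,
    smul_mul_discountedResolvent hM hγ0 hγ1, sub_mulVec, one_mulVec, add_sub_cancel]

lemma dvisit_eq_smul_vecMul_discountedResolvent (hM : matPi π p ∈ rowStochastic ℝ S)
    (hγ0 : 0 ≤ γ) (hγ1 : γ < 1) (ρ : S → ℝ) :
    dvisit γ ρ π p = (1 - γ) • (ρ ᵥ* discountedResolvent γ (matPi π p)) := by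
  funext s
  rw [Pi.smul_apply, smul_eq_mul, dvisit,
    ← ((hasSum_discountedResolvent hM hγ0 hγ1).vecMul_apply ρ s).tsum_eq]
  simp only [vecMul_smul, Pi.smul_apply, smul_eq_mul]
  rfl

end MDP

theorem performance_difference_transitions_second_general
    [Fintype S] [Fintype A] [DecidableEq S]
    (γ : ℝ) (hγ0 : 0 ≤ γ) (hγ1 : γ < 1)
    (c : S → A → S → ℝ)
    (π : S → A → ℝ) (hπ0 : ∀ s a, 0 ≤ π s a) (hπ1 : ∀ s, ∑ a, π s a = 1)
    (p p' : S → A → S → ℝ)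
    (hp0 : ∀ s a s', 0 ≤ p s a s') (hp1 : ∀ s a, ∑ s', p s a s' = 1)
    (hp'0 : ∀ s a s', 0 ≤ p' s a s') (hp'1 : ∀ s a, ∑ s', p' s a s' = 1)
    (ρ : S → ℝ) :
    Vrho γ ρ π p c - Vrho γ ρ π p' c =
      (1 / (1 - γ)) * ∑ s, dvisit γ ρ π p s * ∑ a, π s a *
        ∑ s', (p s a s' - p' s a s') * (c s a s' + γ * Vf γ π p' c s') := by
  have hM := matPi_mem_rowStochastic hπ0 hπ1 hp0 hp1
  have hM' := matPi_mem_rowStochastic hπ0 hπ1 hp'0 hp'1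
  set R := discountedResolvent γ (matPi π p)
  set V' := Vf γ π p' c
  set g : S → ℝ := cPi π p c - (1 - γ • matPi π p) *ᵥ V'
  have hinner (s : S) :
      ∑ a, π s a * ∑ s', (p s a s' - p' s a s') * (c s a s' + γ * V' s') = g s := by
    have hV' := congrFun (Vf_bellman hM' hγ0 hγ1 c) s
    simp only [Pi.add_apply, Pi.smul_apply, smul_eq_mul] at hV'
    simp only [g, sub_mul, sum_sub_distrib, mul_sub, sum_policy_mul_sum_kernel_mul_add,
      Pi.sub_apply, sub_mulVec, one_mulVec, smul_mulVec, Pi.smul_apply, smul_eq_mul]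
    linarith
  have hγ : 1 - γ ≠ 0 := by linarith
  calc Vrho γ ρ π p c - Vrho γ ρ π p' c = ρ ⬝ᵥ (R *ᵥ cPi π p c - V') := by
        rw [Vrho, Vrho, ← Vf_eq_discountedResolvent_mulVec hM hγ0 hγ1, dotProduct_sub]; rfl
    _ = ρ ⬝ᵥ (R *ᵥ g) := by
        rw [mulVec_sub, mulVec_mulVec, discountedResolvent_mul_one_sub_smul hM hγ0 hγ1,
          one_mulVec]
    _ = 1 / (1 - γ) * ((1 - γ) • (ρ ᵥ* R)) ⬝ᵥ g := by
        rw [smul_dotProduct, smul_eq_mul, one_div, inv_mul_cancel_left₀ hγ, dotProduct_mulVec]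
    _ = _ := by
        simp only [hinner, dvisit_eq_smul_vecMul_discountedResolvent hM hγ0 hγ1]
        rfl

/-- Second performance difference lemma across transition kernels:
`V_{π,p}(ρ) - V_{π,p'}(ρ) = (1/(1-γ)) Σ_s d_ρ^{π,p}(s) Σ_a π(a|s)
  Σ_{s'} (p(s'|s,a) - p'(s'|s,a)) (c(s,a,s') + γ V_{π,p'}(s'))`. -/
theorem performance_difference_transitions_second
    [Fintype S] [Fintype A] [DecidableEq S] [Nonempty S] [Nonempty A]
    (γ : ℝ) (hγ0 : 0 ≤ γ) (hγ1 : γ < 1)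
    (c : S → A → S → ℝ)
    (π : S → A → ℝ) (hπ0 : ∀ s a, 0 ≤ π s a) (hπ1 : ∀ s, ∑ a, π s a = 1)
    (p p' : S → A → S → ℝ)
    (hp0 : ∀ s a s', 0 ≤ p s a s') (hp1 : ∀ s a, ∑ s', p s a s' = 1)
    (hp'0 : ∀ s a s', 0 ≤ p' s a s') (hp'1 : ∀ s a, ∑ s', p' s a s' = 1)
    (ρ : S → ℝ) (hρ0 : ∀ s, 0 ≤ ρ s) (hρ1 : ∑ s, ρ s = 1) :
    Vrho γ ρ π p c - Vrho γ ρ π p' c =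
      (1 / (1 - γ)) * ∑ s, dvisit γ ρ π p s * ∑ a, π s a *
        ∑ s', (p s a s' - p' s a s') * (c s a s' + γ * Vf γ π p' c s') :=
  performance_difference_transitions_second_general γ hγ0 hγ1 c π hπ0 hπ1 p p' hp0 hp1 hp'0 hp'1 ρ
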